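/- arXiv:1804.04006 — 5 statements merged into one kernel-verified Lean document; each statement's English description precedes it below -/
import Mathlib

section
/- Let q ≥ 2 be an integer and let T be a triangle presentation of order q on a finite base set F. Let F₂ = {(a,b) ∈ F × F : a ≠ b}, and for (b,d) ∈ F₂ let (α(b,d), γ(b,d)) ∈ F₂ denote the unique pair for which there exists k ∈ F with (α(b,d), b, k) ∈ T and (γ(b,d), d, k) ∈ T. Then the map F₂ → F₂ : (b,d) ↦ (α(b,d), γ(b,d)) is a bijection. -/
/-- A triangle presentation of order `q` on the finite base set `F`:
(i) cyclic invariance; (ii) for each pair `(i,j)` there is at most one `k` with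
`(i,j,k) ∈ T` (one writes `i → j` when such `k` exists; `i` is then a predecessor of `j`
and `j` a successor of `i`); (iii) any two distinct points have exactly one common
predecessor and exactly one common successor; (iv) every point has exactly `q+1`
predecessors and exactly `q+1` successors. -/
def IsTrianglePresentation {F : Type*} [Fintype F] (q : ℕ) (T : Set (F × F × F)) : Prop :=
  (∀ i j k : F, (i, j, k) ∈ T → (k, i, j) ∈ T) ∧
  (∀ i j k k' : F, (i, j, k) ∈ T → (i, j, k') ∈ T → k = k') ∧
  (∀ a b : F, a ≠ b →
      (∃! p : F, (∃ k, (p, a, k) ∈ T) ∧ ∃ k, (p, b, k) ∈ T) ∧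
      (∃! s : F, (∃ k, (a, s, k) ∈ T) ∧ ∃ k, (b, s, k) ∈ T)) ∧
  (∀ x : F, {p : F | ∃ k, (p, x, k) ∈ T}.ncard = q + 1 ∧
      {s : F | ∃ k, (x, s, k) ∈ T}.ncard = q + 1)

/-!
Write `(b, d) ↦ (α, γ)` when `(α, b, k), (γ, d, k) ∈ T` for some `k`. By cyclic invariance,
`(α, b, k) ∈ T` says that `k` is a predecessor of `α` and a successor of `b`. So for `α ≠ γ`
the witness `k` must be the unique common predecessor of `α` and `γ`, which recovers `(b, d)`
from `(α, γ)`; dually, for `b ≠ d` it must be the unique common successor of `b` and `d`,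
which recovers `(α, γ)` from `(b, d)`. Hence the relation is the graph of a bijection of `F₂`.
-/

section

variable {F : Type*} {T : Set (F × F × F)}

def CyclicallyInvariant (T : Set (F × F × F)) : Prop :=
  ∀ i j k : F, (i, j, k) ∈ T → (k, i, j) ∈ T

def ThirdDetermined (T : Set (F × F × F)) : Prop :=
  ∀ i j k k' : F, (i, j, k) ∈ T → (i, j, k') ∈ T → k = k'

namespace CyclicallyInvariant

theorem rotate (hc : CyclicallyInvariant T) {i j k : F} (h : (i, j, k) ∈ T) : (j, k, i) ∈ T :=
  hc _ _ _ (hc _ _ _ h)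

theorem fst_eq (hc : CyclicallyInvariant T) (hu : ThirdDetermined T) {a a' b k : F}
    (h : (a, b, k) ∈ T) (h' : (a', b, k) ∈ T) : a = a' :=
  hu _ _ _ _ (hc.rotate h) (hc.rotate h')

theorem snd_eq (hc : CyclicallyInvariant T) (hu : ThirdDetermined T) {a b b' k : F}
    (h : (a, b, k) ∈ T) (h' : (a, b', k) ∈ T) : b = b' :=
  hu _ _ _ _ (hc _ _ _ h) (hc _ _ _ h')

theorem fst_ne_of_snd_ne (hc : CyclicallyInvariant T) (hu : ThirdDetermined T) {α γ b d k : F}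
    (hα : (α, b, k) ∈ T) (hγ : (γ, d, k) ∈ T) (hbd : b ≠ d) : α ≠ γ := by
  rintro rfl
  exact hbd (hc.snd_eq hu hα hγ)

theorem snd_ne_of_fst_ne (hc : CyclicallyInvariant T) (hu : ThirdDetermined T) {α γ b d k : F}
    (hα : (α, b, k) ∈ T) (hγ : (γ, d, k) ∈ T) (hαγ : α ≠ γ) : b ≠ d := by
  rintro rfl
  exact hαγ (hc.fst_eq hu hα hγ)

theorem eq_of_existsUnique_commonPredecessor (hc : CyclicallyInvariant T) (hu : ThirdDetermined T)
    {α γ b d b' d' k k' : F}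
    (hpred : ∃! p : F, (∃ k, (p, α, k) ∈ T) ∧ ∃ k, (p, γ, k) ∈ T)
    (hα : (α, b, k) ∈ T) (hγ : (γ, d, k) ∈ T) (hα' : (α, b', k') ∈ T) (hγ' : (γ, d', k') ∈ T) :
    b = b' ∧ d = d' := by
  obtain rfl : k = k' :=
    hpred.unique ⟨⟨b, hc _ _ _ hα⟩, ⟨d, hc _ _ _ hγ⟩⟩ ⟨⟨b', hc _ _ _ hα'⟩, ⟨d', hc _ _ _ hγ'⟩⟩
  exact ⟨hc.snd_eq hu hα hα', hc.snd_eq hu hγ hγ'⟩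

theorem eq_of_existsUnique_commonSuccessor (hc : CyclicallyInvariant T) (hu : ThirdDetermined T)
    {α γ α' γ' b d k k' : F}
    (hsucc : ∃! s : F, (∃ k, (b, s, k) ∈ T) ∧ ∃ k, (d, s, k) ∈ T)
    (hα : (α, b, k) ∈ T) (hγ : (γ, d, k) ∈ T) (hα' : (α', b, k') ∈ T) (hγ' : (γ', d, k') ∈ T) :
    α = α' ∧ γ = γ' := by
  obtain rfl : k = k' :=
    hsucc.unique ⟨⟨α, hc.rotate hα⟩, ⟨γ, hc.rotate hγ⟩⟩ ⟨⟨α', hc.rotate hα'⟩, ⟨γ', hc.rotate hγ'⟩⟩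
  exact ⟨hc.fst_eq hu hα hα', hc.fst_eq hu hγ hγ'⟩

end CyclicallyInvariant

end

theorem bijOn_of_trianglePresentation_general {F : Type*} [Fintype F] (q : ℕ)
    (T : Set (F × F × F)) (hT : IsTrianglePresentation q T)
    (f : F × F → F × F)
    (hf : ∀ b d : F, b ≠ d → ∃ k : F, ((f (b, d)).1, b, k) ∈ T ∧ ((f (b, d)).2, d, k) ∈ T) :
    Set.BijOn f {p : F × F | p.1 ≠ p.2} {p : F × F | p.1 ≠ p.2} := by
  obtain ⟨(hc : CyclicallyInvariant T), hu, hcommon, -⟩ := hT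
  refine ⟨?mapsTo, ?injOn, ?surjOn⟩
  case mapsTo =>
    rintro ⟨b, d⟩ (hbd : b ≠ d)
    obtain ⟨k, hα, hγ⟩ := hf b d hbd
    exact hc.fst_ne_of_snd_ne hu hα hγ hbd
  case injOn =>
    rintro ⟨b, d⟩ (hbd : b ≠ d) ⟨b', d'⟩ (hbd' : b' ≠ d') heq
    obtain ⟨k, hα, hγ⟩ := hf b d hbd
    obtain ⟨k', hα', hγ'⟩ := hf b' d' hbd'
    rw [heq] at hα hγ
    obtain ⟨rfl, rfl⟩ := hc.eq_of_existsUnique_commonPredecessor hu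
      (hcommon _ _ (hc.fst_ne_of_snd_ne hu hα' hγ' hbd')).1 hα hγ hα' hγ'
    rfl
  case surjOn =>
    rintro ⟨α, γ⟩ (hαγ : α ≠ γ)
    obtain ⟨p, ⟨⟨b, hb⟩, ⟨d, hd⟩⟩, -⟩ := (hcommon α γ hαγ).1
    have hbd : b ≠ d := hc.snd_ne_of_fst_ne hu (hc.rotate hb) (hc.rotate hd) hαγ
    obtain ⟨k, hα, hγ⟩ := hf b d hbd
    obtain ⟨hfα, hfγ⟩ := hc.eq_of_existsUnique_commonSuccessor hu (hcommon b d hbd).2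
      hα hγ (hc.rotate hb) (hc.rotate hd)
    exact ⟨(b, d), hbd, Prod.ext hfα hfγ⟩

/-- The map `F₂ → F₂ : (b,d) ↦ (α(b,d), γ(b,d))`, where `(α(b,d), γ(b,d))` is the unique
pair for which there exists `k` with `(α(b,d), b, k) ∈ T` and `(γ(b,d), d, k) ∈ T`, is a
bijection of `F₂ = {(a,b) : a ≠ b}` onto itself. -/
theorem bijOn_of_trianglePresentation {F : Type*} [Fintype F] (q : ℕ) (hq : 2 ≤ q)
    (T : Set (F × F × F)) (hT : IsTrianglePresentation q T)
    (f : F × F → F × F)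
    (hf : ∀ b d : F, b ≠ d → ∃ k : F, ((f (b, d)).1, b, k) ∈ T ∧ ((f (b, d)).2, d, k) ∈ T) :
    Set.BijOn f {p : F × F | p.1 ≠ p.2} {p : F × F | p.1 ≠ p.2} :=
  bijOn_of_trianglePresentation_general q T hT f hf
end

section
/- Let q ≥ 2 be an integer and T a triangle presentation of order q on a finite base set F. Then, as linear operators on ℂ^F ⊗ ℂ^F, one has (E* ⊗ 1 ⊗ 1)(1 ⊗ 1 ⊗ E) = (1 ⊗ 1 ⊗ E*)(E ⊗ 1 ⊗ 1) = (q+1)·YY*. In particular, P := YY* = (q+1)^{-1}(E* ⊗ 1 ⊗ 1)(1 ⊗ 1 ⊗ E) is the orthogonal projection of ℂ^F ⊗ ℂ^F onto the linear span of the vectors ξ_i = Σ_{(i,j,k)∈T} e_j ⊗ e_k, i ∈ F. -/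
open Matrix

variable {F : Type*} [Fintype F] [DecidableEq F]

/-- The vector `E = Σ_{(a,b,c)∈T} e_a ⊗ e_b ⊗ e_c ∈ (ℂ^F)^{⊗3}`, in the identification of
`(ℂ^F)^{⊗3}` with functions `F³ → ℂ`. -/
noncomputable def Evec (T : Set (F × F × F)) [DecidablePred (· ∈ T)] : F × F × F → ℂ :=
  fun x => if x ∈ T then 1 else 0

/-- The vectors `ξ_i = Σ_{(i,j,k)∈T} e_j ⊗ e_k ∈ ℂ^F ⊗ ℂ^F`. -/
noncomputable def xiVec (T : Set (F × F × F)) [DecidablePred (· ∈ T)] : F → (F × F → ℂ) :=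
  fun i p => if (i, p.1, p.2) ∈ T then 1 else 0

/-- The matrix (in the standard orthonormal bases) of the map `Y : ℂ^F → ℂ^F ⊗ ℂ^F`,
`Y e_i = (q+1)^{-1/2} Σ_{(i,j,k)∈T} e_j ⊗ e_k`. -/
noncomputable def Ymat (q : ℕ) (T : Set (F × F × F)) [DecidablePred (· ∈ T)] :
    Matrix (F × F) F ℂ :=
  Matrix.of fun p i =>
    if (i, p.1, p.2) ∈ T then (((Real.sqrt ((q : ℝ) + 1))⁻¹ : ℝ) : ℂ) else 0

/-- The matrix of `1 ⊗ 1 ⊗ E : ℂ^F ⊗ ℂ^F → (ℂ^F)^{⊗5}`. -/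
noncomputable def oneOneE (T : Set (F × F × F)) [DecidablePred (· ∈ T)] :
    Matrix (F × F × F × F × F) (F × F) ℂ :=
  Matrix.of fun x p =>
    if x.1 = p.1 ∧ x.2.1 = p.2 ∧ (x.2.2.1, x.2.2.2.1, x.2.2.2.2) ∈ T then 1 else 0

/-- The matrix of `E* ⊗ 1 ⊗ 1 : (ℂ^F)^{⊗5} → ℂ^F ⊗ ℂ^F`. -/
noncomputable def estarOneOne (T : Set (F × F × F)) [DecidablePred (· ∈ T)] :
    Matrix (F × F) (F × F × F × F × F) ℂ :=
  Matrix.of fun p x =>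
    if (x.1, x.2.1, x.2.2.1) ∈ T ∧ p.1 = x.2.2.2.1 ∧ p.2 = x.2.2.2.2 then 1 else 0

/-- The matrix of `E ⊗ 1 ⊗ 1 : ℂ^F ⊗ ℂ^F → (ℂ^F)^{⊗5}`. -/
noncomputable def eOneOne (T : Set (F × F × F)) [DecidablePred (· ∈ T)] :
    Matrix (F × F × F × F × F) (F × F) ℂ :=
  Matrix.of fun x p =>
    if (x.1, x.2.1, x.2.2.1) ∈ T ∧ x.2.2.2.1 = p.1 ∧ x.2.2.2.2 = p.2 then 1 else 0

/-- The matrix of `1 ⊗ 1 ⊗ E* : (ℂ^F)^{⊗5} → ℂ^F ⊗ ℂ^F`. -/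
noncomputable def oneOneEstar (T : Set (F × F × F)) [DecidablePred (· ∈ T)] :
    Matrix (F × F) (F × F × F × F × F) ℂ :=
  Matrix.of fun p x =>
    if p.1 = x.1 ∧ p.2 = x.2.1 ∧ (x.2.2.1, x.2.2.2.1, x.2.2.2.2) ∈ T then 1 else 0

/-- The operator `P = (q+1)⁻¹ (E* ⊗ 1 ⊗ 1)(1 ⊗ 1 ⊗ E)` on `ℂ^F ⊗ ℂ^F`. -/
noncomputable def Pmat (q : ℕ) (T : Set (F × F × F)) [DecidablePred (· ∈ T)] :
    Matrix (F × F) (F × F) ℂ :=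
  ((q : ℂ) + 1)⁻¹ • (estarOneOne T * oneOneE T)

/-!
Let `X` be the matrix whose columns are the `ξ_i`. By cyclic invariance, both
`(E* ⊗ 1 ⊗ 1)(1 ⊗ 1 ⊗ E)` and `(1 ⊗ 1 ⊗ E*)(E ⊗ 1 ⊗ 1)` have `((a,b),(a',b'))` entry
`#{c | (c,a,b) ∈ T, (c,a',b') ∈ T}`, i.e. both equal `X X*`. The `ξ_i` are orthogonal, since
`(j,k)` determines `i` with `(i,j,k) ∈ T`, and each has `q + 1` entries equal to `1`, one for each
successor `j` of `i`; so `X* X = (q + 1) • 1`. Hence `Y = (q + 1)^{-1/2} X` is an isometry and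
`Y Y*` is the orthogonal projection onto the range of `Y`, the span of the `ξ_i`.
-/

section Isometry

variable {m n R : Type*} [Fintype m] [Fintype n] [DecidableEq n] [CommSemiring R]
  [StarRing R]

theorem Matrix.mul_conjTranspose_mul_self_of_conjTranspose_mul_self_eq_one
    {Y : Matrix m n R} (hY : Yᴴ * Y = 1) : Y * Yᴴ * (Y * Yᴴ) = Y * Yᴴ := by
  rw [Matrix.mul_assoc, ← Matrix.mul_assoc Yᴴ, hY, Matrix.one_mul]

theorem Matrix.range_mulVecLin_mul_conjTranspose_of_conjTranspose_mul_self_eq_one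
    {Y : Matrix m n R} (hY : Yᴴ * Y = 1) :
    LinearMap.range (Y * Yᴴ).mulVecLin = LinearMap.range Y.mulVecLin := by
  refine le_antisymm ?_ ?_
  · rw [mulVecLin_mul]
    exact LinearMap.range_comp_le_range _ _
  · conv_lhs => rw [← Matrix.mul_one Y, ← hY, ← Matrix.mul_assoc, mulVecLin_mul]
    exact LinearMap.range_comp_le_range _ _

end Isometry

theorem Matrix.range_mulVecLin_smul {m n K : Type*} [Fintype n] [Field K] (M : Matrix m n K)
    {c : K} (hc : c ≠ 0) : LinearMap.range (c • M).mulVecLin = LinearMap.range M.mulVecLin := by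
  rw [show (c • M).mulVecLin = c • M.mulVecLin from
    LinearMap.ext fun v => Matrix.smul_mulVec c M v, LinearMap.range_smul _ _ hc]

theorem sum_ite_eq_five {M : Type*} [AddCommMonoid M] (a b d e : F) (f : F → M) :
    ∑ x : F × F × F × F × F,
      (if x.1 = a ∧ x.2.1 = b ∧ x.2.2.2.1 = d ∧ x.2.2.2.2 = e then f x.2.2.1 else 0) =
      ∑ c, f c := by
  simp [Fintype.sum_prod_type, ite_and]

theorem rotate_mem_iff {α : Type*} {T : Set (α × α × α)}
    (hcyc : ∀ i j k : α, (i, j, k) ∈ T → (k, i, j) ∈ T) (i j k : α) :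
    (k, i, j) ∈ T ↔ (i, j, k) ∈ T :=
  ⟨fun h => hcyc _ _ _ (hcyc _ _ _ h), hcyc i j k⟩

variable {T : Set (F × F × F)} [DecidablePred (· ∈ T)]

variable (T) in
noncomputable def xiMat : Matrix (F × F) F ℂ :=
  Matrix.of fun p i => xiVec T i p

omit [DecidableEq F] in
theorem xiMat_mul_conjTranspose_apply (a b a' b' : F) :
    (xiMat T * (xiMat T)ᴴ) (a, b) (a', b') =
      ∑ c, if (c, a, b) ∈ T ∧ (c, a', b') ∈ T then 1 else 0 := by
  simp only [Matrix.mul_apply, Matrix.conjTranspose_apply, xiMat, xiVec, Matrix.of_apply,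
    apply_ite star, star_one, star_zero, ite_zero_mul_ite_zero, mul_one]

theorem estarOneOne_mul_oneOneE_eq_xiMat_mul
    (hcyc : ∀ i j k : F, (i, j, k) ∈ T → (k, i, j) ∈ T) :
    estarOneOne T * oneOneE T = xiMat T * (xiMat T)ᴴ := by
  ext ⟨a, b⟩ ⟨a', b'⟩
  have hentry : (estarOneOne T * oneOneE T) (a, b) (a', b') =
      ∑ c, if (a', b', c) ∈ T ∧ (c, a, b) ∈ T then 1 else 0 := by
    rw [Matrix.mul_apply, ← sum_ite_eq_five a' b' a b]
    refine Finset.sum_congr rfl fun ⟨x0, x1, x2, d, e⟩ _ => ?_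
    simp only [estarOneOne, oneOneE, Matrix.of_apply, ite_zero_mul_ite_zero, mul_one]
    grind
  simp only [hentry, xiMat_mul_conjTranspose_apply, ← rotate_mem_iff hcyc a' b', and_comm]

theorem oneOneEstar_mul_eOneOne_eq_xiMat_mul
    (hcyc : ∀ i j k : F, (i, j, k) ∈ T → (k, i, j) ∈ T) :
    oneOneEstar T * eOneOne T = xiMat T * (xiMat T)ᴴ := by
  ext ⟨a, b⟩ ⟨a', b'⟩
  have hentry : (oneOneEstar T * eOneOne T) (a, b) (a', b') =
      ∑ c, if (a, b, c) ∈ T ∧ (c, a', b') ∈ T then 1 else 0 := by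
    rw [Matrix.mul_apply, ← sum_ite_eq_five a b a' b']
    refine Finset.sum_congr rfl fun ⟨x0, x1, x2, d, e⟩ _ => ?_
    simp only [oneOneEstar, eOneOne, Matrix.of_apply, ite_zero_mul_ite_zero, mul_one]
    grind
  simp only [hentry, xiMat_mul_conjTranspose_apply, ← rotate_mem_iff hcyc a b]

omit [DecidableEq F] in
theorem card_filter_mem_eq {q : ℕ}
    (huniq : ∀ i j k k' : F, (i, j, k) ∈ T → (i, j, k') ∈ T → k = k') (i : F)
    (hsucc : {s : F | ∃ k, (i, s, k) ∈ T}.ncard = q + 1) :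
    (Finset.univ.filter fun p : F × F => (i, p.1, p.2) ∈ T).card = q + 1 := by
  have himage :
      Prod.fst '' {p : F × F | (i, p.1, p.2) ∈ T} = {s : F | ∃ k, (i, s, k) ∈ T} := by
    ext s
    simp
  have hinj : Set.InjOn Prod.fst {p : F × F | (i, p.1, p.2) ∈ T} := by
    rintro ⟨j, k⟩ hk ⟨j', k'⟩ hk' (rfl : j = j')
    rw [huniq i j k k' hk hk']
  rw [← hsucc, ← himage, hinj.ncard_image, ← Set.ncard_coe_finset]
  simp

theorem xiMat_conjTranspose_mul_self {q : ℕ}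
    (hcyc : ∀ i j k : F, (i, j, k) ∈ T → (k, i, j) ∈ T)
    (huniq : ∀ i j k k' : F, (i, j, k) ∈ T → (i, j, k') ∈ T → k = k')
    (hsucc : ∀ i : F, {s : F | ∃ k, (i, s, k) ∈ T}.ncard = q + 1) :
    (xiMat T)ᴴ * xiMat T = ((q : ℂ) + 1) • 1 := by
  ext i i'
  simp only [Matrix.mul_apply, Matrix.conjTranspose_apply, xiMat, xiVec, Matrix.of_apply,
    apply_ite star, star_one, star_zero, ite_zero_mul_ite_zero, mul_one]
  rcases eq_or_ne i i' with rfl | hne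
  · simp only [and_self, Finset.sum_boole, card_filter_mem_eq huniq i (hsucc i)]
    simp
  · refine (Finset.sum_eq_zero fun p _ => if_neg ?_).trans (by simp [hne])
    rintro ⟨hi, hi'⟩
    exact hne (huniq _ _ _ _ ((rotate_mem_iff hcyc _ _ _).mp hi)
      ((rotate_mem_iff hcyc _ _ _).mp hi'))

omit [Fintype F] [DecidableEq F] in
theorem Ymat_eq_smul_xiMat (q : ℕ) :
    Ymat q T = (((Real.sqrt ((q : ℝ) + 1))⁻¹ : ℝ) : ℂ) • xiMat T := by
  ext p i
  simp [Ymat, xiMat, xiVec]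

theorem star_inv_sqrt_succ_mul_self (q : ℕ) :
    star (((Real.sqrt ((q : ℝ) + 1))⁻¹ : ℝ) : ℂ) *
      (((Real.sqrt ((q : ℝ) + 1))⁻¹ : ℝ) : ℂ) = ((q : ℂ) + 1)⁻¹ := by
  rw [Complex.star_def, Complex.conj_ofReal, ← Complex.ofReal_mul, ← mul_inv,
    Real.mul_self_sqrt (by positivity)]
  simp

omit [DecidableEq F] in
theorem Ymat_mul_conjTranspose (q : ℕ) :
    Ymat q T * (Ymat q T)ᴴ = ((q : ℂ) + 1)⁻¹ • (xiMat T * (xiMat T)ᴴ) := by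
  rw [Ymat_eq_smul_xiMat, conjTranspose_smul, Matrix.smul_mul, Matrix.mul_smul, smul_smul,
    mul_comm, star_inv_sqrt_succ_mul_self]

omit [DecidableEq F] in
theorem conjTranspose_Ymat_mul (q : ℕ) :
    (Ymat q T)ᴴ * Ymat q T = ((q : ℂ) + 1)⁻¹ • ((xiMat T)ᴴ * xiMat T) := by
  rw [Ymat_eq_smul_xiMat, conjTranspose_smul, Matrix.smul_mul, Matrix.mul_smul, smul_smul,
    star_inv_sqrt_succ_mul_self]

omit [DecidableEq F] in
theorem range_mulVecLin_Ymat (q : ℕ) :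
    LinearMap.range (Ymat q T).mulVecLin = Submodule.span ℂ (Set.range (xiVec T)) := by
  rw [Ymat_eq_smul_xiMat, Matrix.range_mulVecLin_smul _ (by simp; positivity),
    Matrix.range_mulVecLin]
  rfl

theorem estarOneOne_mul_oneOneE_general (q : ℕ) (T : Set (F × F × F))
    [DecidablePred (· ∈ T)] (hT : IsTrianglePresentation q T) :
    estarOneOne T * oneOneE T = oneOneEstar T * eOneOne T ∧
    estarOneOne T * oneOneE T = ((q : ℂ) + 1) • (Ymat q T * (Ymat q T)ᴴ) ∧
    (Pmat q T)ᴴ = Pmat q T ∧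
    Pmat q T * Pmat q T = Pmat q T ∧
    LinearMap.range (Matrix.mulVecLin (Pmat q T)) =
      Submodule.span ℂ (Set.range (xiVec T)) := by
  obtain ⟨hcyc, huniq, -, hdeg⟩ := hT
  have hq₁ : (q : ℂ) + 1 ≠ 0 := by exact_mod_cast q.succ_ne_zero
  have hY : (Ymat q T)ᴴ * Ymat q T = 1 := by
    rw [conjTranspose_Ymat_mul, xiMat_conjTranspose_mul_self hcyc huniq fun i => (hdeg i).2,
      inv_smul_smul₀ hq₁]
  have hE : estarOneOne T * oneOneE T = ((q : ℂ) + 1) • (Ymat q T * (Ymat q T)ᴴ) := by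
    rw [Ymat_mul_conjTranspose, smul_inv_smul₀ hq₁, estarOneOne_mul_oneOneE_eq_xiMat_mul hcyc]
  have hP : Pmat q T = Ymat q T * (Ymat q T)ᴴ := by
    rw [Pmat, hE, inv_smul_smul₀ hq₁]
  refine ⟨?_, hE, ?_, ?_, ?_⟩
  · rw [estarOneOne_mul_oneOneE_eq_xiMat_mul hcyc, oneOneEstar_mul_eOneOne_eq_xiMat_mul hcyc]
  · rw [hP]
    exact isHermitian_mul_conjTranspose_self _
  · rw [hP]
    exact mul_conjTranspose_mul_self_of_conjTranspose_mul_self_eq_one hY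
  · rw [hP, range_mulVecLin_mul_conjTranspose_of_conjTranspose_mul_self_eq_one hY,
      range_mulVecLin_Ymat]

/-- `(E*⊗1⊗1)(1⊗1⊗E) = (1⊗1⊗E*)(E⊗1⊗1) = (q+1)·YY*`; in particular
`P = (q+1)⁻¹(E*⊗1⊗1)(1⊗1⊗E)` is the orthogonal projection of `ℂ^F ⊗ ℂ^F` onto the
linear span of the vectors `ξ_i`, `i ∈ F`. -/
theorem estarOneOne_mul_oneOneE (q : ℕ) (hq : 2 ≤ q) (T : Set (F × F × F))
    [DecidablePred (· ∈ T)] (hT : IsTrianglePresentation q T) :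
    estarOneOne T * oneOneE T = oneOneEstar T * eOneOne T ∧
    estarOneOne T * oneOneE T = ((q : ℂ) + 1) • (Ymat q T * (Ymat q T)ᴴ) ∧
    (Pmat q T)ᴴ = Pmat q T ∧
    Pmat q T * Pmat q T = Pmat q T ∧
    LinearMap.range (Matrix.mulVecLin (Pmat q T)) =
      Submodule.span ℂ (Set.range (xiVec T)) :=
  estarOneOne_mul_oneOneE_general q T hT
end

section
/- Let q ≥ 2 be an integer and T a triangle presentation of order q on a finite base set F. Let R be the orthogonal projection of ℂ^F ⊗ ℂ^F onto the span of the basis vectors e_i ⊗ e_j with i → j in T, and let Q be the orthogonal projection of (ℂ^F)^{⊗3} onto the span of the vectors e_i ⊗ ξ_i (i ∈ F). Then R = (E* ⊗ 1 ⊗ 1)(1 ⊗ Q ⊗ 1)(1 ⊗ 1 ⊗ E) as operators on ℂ^F ⊗ ℂ^F. -/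
open Matrix

variable {F : Type*} [Fintype F] [DecidableEq F]

/-- The vectors `e_i ⊗ ξ_i ∈ (ℂ^F)^{⊗3}`. -/
noncomputable def etaVec (T : Set (F × F × F)) [DecidablePred (· ∈ T)] :
    F → (F × F × F → ℂ) :=
  fun i x => if x.1 = i ∧ (i, x.2.1, x.2.2) ∈ T then 1 else 0

/-- The orthogonal projection `Q = (q+1)⁻¹ Σ_{i∈F} |e_i ⊗ ξ_i⟩⟨e_i ⊗ ξ_i|` of `(ℂ^F)^{⊗3}`
onto the span of the vectors `e_i ⊗ ξ_i`. -/
noncomputable def Qmat (q : ℕ) (T : Set (F × F × F)) [DecidablePred (· ∈ T)] :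
    Matrix (F × F × F) (F × F × F) ℂ :=
  ((q : ℂ) + 1)⁻¹ • ∑ i : F, Matrix.vecMulVec (etaVec T i) (star (etaVec T i))

/-- The matrix of `1 ⊗ Q ⊗ 1 : (ℂ^F)^{⊗5} → (ℂ^F)^{⊗5}` (with `Q` acting on the middle
three tensor legs). -/
noncomputable def oneQoneMat (q : ℕ) (T : Set (F × F × F)) [DecidablePred (· ∈ T)] :
    Matrix (F × F × F × F × F) (F × F × F × F × F) ℂ :=
  Matrix.of fun x y =>
    if x.1 = y.1 ∧ x.2.2.2.2 = y.2.2.2.2 then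
      Qmat q T (x.2.1, x.2.2.1, x.2.2.2.1) (y.2.1, y.2.2.1, y.2.2.2.1)
    else 0

/-- The orthogonal projection `R` of `ℂ^F ⊗ ℂ^F` onto the span of the basis vectors
`e_i ⊗ e_j` with `i → j` in `T`. -/
noncomputable def Rmat (T : Set (F × F × F)) [DecidablePred (· ∈ T)] :
    Matrix (F × F) (F × F) ℂ :=
  Matrix.of fun p p' => if p = p' ∧ ∃ k : F, (p.1, p.2, k) ∈ T then 1 else 0

section
variable {α : Type*} {T : Set (α × α × α)}

lemma eq_of_mem_of_rotate_mem (hcyc : ∀ i j k : α, (i, j, k) ∈ T → (k, i, j) ∈ T)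
    (huniq : ∀ i j k k' : α, (i, j, k) ∈ T → (i, j, k') ∈ T → k = k') {a b c l : α}
    (habc : (a, b, c) ∈ T) (hbcl : (b, c, l) ∈ T) : l = a :=
  huniq _ _ _ _ hbcl (hcyc _ _ _ (hcyc _ _ _ habc))

variable [DecidablePred (· ∈ T)]

lemma star_Evec (x : α × α × α) : star (Evec T x) = Evec T x := by
  unfold Evec
  split_ifs <;> simp

lemma etaVec_apply [DecidableEq α] (i : α) (x : α × α × α) :
    etaVec T i x = if x.1 = i then Evec T x else 0 := by
  obtain ⟨x₁, x₂, x₃⟩ := x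
  by_cases h : x₁ = i <;> simp [etaVec, Evec, h]

lemma Evec_mul_Evec_rotate [DecidableEq α] (hcyc : ∀ i j k : α, (i, j, k) ∈ T → (k, i, j) ∈ T)
    (huniq : ∀ i j k k' : α, (i, j, k) ∈ T → (i, j, k') ∈ T → k = k') (a b c l : α) :
    Evec T (a, b, c) * Evec T (b, c, l) = if l = a then Evec T (a, b, c) else 0 := by
  by_cases habc : (a, b, c) ∈ T
  · by_cases hl : l = a
    · subst hl
      simp [Evec, habc, hcyc _ _ _ (hcyc _ _ _ habc)]
    · have hbcl : (b, c, l) ∉ T := fun h => hl (eq_of_mem_of_rotate_mem hcyc huniq habc h)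
      simp [Evec, hl, hbcl]
  · simp [Evec, habc]

variable [Fintype α]

lemma sum_Evec (huniq : ∀ i j k k' : α, (i, j, k) ∈ T → (i, j, k') ∈ T → k = k') (i j : α) :
    ∑ k, Evec T (i, j, k) = if ∃ k, (i, j, k) ∈ T then 1 else 0 := by
  split_ifs with h
  · obtain ⟨k, hk⟩ := h
    rw [Fintype.sum_eq_single (f := fun c => Evec T (i, j, c)) k
      fun c hc => if_neg fun h => hc (huniq _ _ _ _ h hk)]
    exact if_pos hk
  · exact Finset.sum_eq_zero fun k _ => if_neg fun hk => h ⟨k, hk⟩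

lemma sum_sum_Evec (huniq : ∀ i j k k' : α, (i, j, k) ∈ T → (i, j, k') ∈ T → k = k') (i : α) :
    ∑ j, ∑ k, Evec T (i, j, k) = {j | ∃ k, (i, j, k) ∈ T}.ncard := by
  simp_rw [sum_Evec huniq, Finset.sum_boole, Set.ncard_eq_toFinset_card', Set.toFinset_ofPred]

end

section
variable (q : ℕ) (T : Set (F × F × F)) [DecidablePred (· ∈ T)]

lemma Qmat_apply (a b : F × F × F) :
    Qmat q T a b = ((q : ℂ) + 1)⁻¹ * if a.1 = b.1 then Evec T a * Evec T b else 0 := by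
  simp only [Qmat, Matrix.smul_apply, Matrix.sum_apply, Matrix.vecMulVec_apply, Pi.star_apply,
    etaVec_apply, apply_ite (star : ℂ → ℂ), star_zero, star_Evec, smul_eq_mul]
  simp [ite_mul, mul_ite, eq_comm]

lemma estarOneOne_mul_oneQoneMat_mul_oneOneE_apply (p p' : F × F) :
    (estarOneOne T * oneQoneMat q T * oneOneE T) p p' =
      ((q : ℂ) + 1)⁻¹ * (∑ u, ∑ v, Evec T (p'.2, u, v) * Evec T (u, v, p.2)) *
        ∑ c, Evec T (p'.1, p'.2, c) * Evec T (p'.2, c, p.1) := by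
  obtain ⟨p₁, p₂⟩ := p
  obtain ⟨p₁', p₂'⟩ := p'
  simp only [Matrix.mul_apply, estarOneOne, oneQoneMat, oneOneE, Matrix.of_apply, Qmat_apply,
    Fintype.sum_prod_type, ite_and, mul_ite, ite_mul, mul_zero, zero_mul,
    Finset.sum_ite_eq, Finset.sum_ite_eq', Finset.mem_univ,
    Finset.sum_ite_irrel, Finset.sum_const_zero]
  rw [mul_assoc, Finset.sum_mul, Finset.mul_sum]
  refine Finset.sum_congr rfl fun u _ => ?_
  rw [Finset.sum_mul, Finset.mul_sum]
  refine Finset.sum_congr rfl fun v _ => ?_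
  rw [Finset.sum_eq_single p₂ (fun w _ hw => by simp [Ne.symm hw]) (by simp), Finset.mul_sum,
    Finset.mul_sum]
  by_cases h₁ : (u, v, p₂) ∈ T <;> by_cases h₂ : (p₂', u, v) ∈ T <;>
    simp [Evec, h₁, h₂, ← ite_and, and_comm]

end

theorem Rmat_eq_general (q : ℕ) (T : Set (F × F × F)) [DecidablePred (· ∈ T)]
    (hT : IsTrianglePresentation q T) :
    Rmat T = estarOneOne T * oneQoneMat q T * oneOneE T := by
  obtain ⟨hcyc, huniq, -, hcard⟩ := hT
  ext ⟨p₁, p₂⟩ ⟨p₁', p₂'⟩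
  have hsucc : ∑ u, ∑ v, Evec T (p₂', u, v) * Evec T (u, v, p₂) =
      if p₂ = p₂' then (q + 1 : ℂ) else 0 := by
    simp_rw [Evec_mul_Evec_rotate hcyc huniq, Finset.sum_ite_irrel, Finset.sum_const_zero,
      sum_sum_Evec huniq, (hcard p₂').2, Nat.cast_add_one]
  have hpred : ∑ c, Evec T (p₁', p₂', c) * Evec T (p₂', c, p₁) =
      if p₁ = p₁' ∧ ∃ k, (p₁', p₂', k) ∈ T then 1 else 0 := by
    simp_rw [Evec_mul_Evec_rotate hcyc huniq, Finset.sum_ite_irrel, Finset.sum_const_zero,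
      sum_Evec huniq, ← ite_and]
  rw [estarOneOne_mul_oneQoneMat_mul_oneOneE_apply, hsucc, hpred]
  by_cases h₁ : p₁ = p₁' <;> by_cases h₂ : p₂ = p₂' <;>
    simp [Rmat, h₁, h₂, Nat.cast_add_one_ne_zero]

/-- `R = (E* ⊗ 1 ⊗ 1)(1 ⊗ Q ⊗ 1)(1 ⊗ 1 ⊗ E)` as operators on `ℂ^F ⊗ ℂ^F`. -/
theorem Rmat_eq (q : ℕ) (hq : 2 ≤ q) (T : Set (F × F × F)) [DecidablePred (· ∈ T)]
    (hT : IsTrianglePresentation q T) :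
    Rmat T = estarOneOne T * oneQoneMat q T * oneOneE T :=
  Rmat_eq_general q T hT
end

section
/- Let q ≥ 2 be an integer and T a triangle presentation of order q on a finite base set F. Let Y : ℂ^F → ℂ^F ⊗ ℂ^F be the isometry Y e_i = (q+1)^{-1/2} Σ_{(i,j,k)∈T} e_j ⊗ e_k. Then the operator (Y* ⊗ 1)(1 ⊗ Y) on ℂ^F ⊗ ℂ^F is invertible. -/
open Matrix

variable {F : Type*} [Fintype F] [DecidableEq F]

/-- The matrix of `1 ⊗ Y : ℂ^F ⊗ ℂ^F → (ℂ^F)^{⊗3}`. -/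
noncomputable def oneYmat (q : ℕ) (T : Set (F × F × F)) [DecidablePred (· ∈ T)] :
    Matrix (F × F × F) (F × F) ℂ :=
  Matrix.of fun x p => if x.1 = p.1 then Ymat q T x.2 p.2 else 0

/-- The matrix of `Y* ⊗ 1 : (ℂ^F)^{⊗3} → ℂ^F ⊗ ℂ^F`. -/
noncomputable def ystarOneMat (q : ℕ) (T : Set (F × F × F)) [DecidablePred (· ∈ T)] :
    Matrix (F × F) (F × F × F) ℂ :=
  Matrix.of fun p x => if p.2 = x.2.2 then (Ymat q T)ᴴ p.1 (x.1, x.2.1) else 0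

open Finset

namespace IsTrianglePresentation

variable {q : ℕ} {T : Set (F × F × F)}

section

omit [DecidableEq F]

theorem rotate (hT : IsTrianglePresentation q T) {i j k : F} (h : (i, j, k) ∈ T) :
    (k, i, j) ∈ T :=
  hT.1 i j k h

theorem rotate_inv (hT : IsTrianglePresentation q T) {i j k : F} (h : (i, j, k) ∈ T) :
    (j, k, i) ∈ T :=
  hT.rotate (hT.rotate h)

theorem eq_of_mem (hT : IsTrianglePresentation q T) {i j k k' : F} (h : (i, j, k) ∈ T)
    (h' : (i, j, k') ∈ T) : k = k' :=
  hT.2.1 i j k k' h h'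

theorem existsUnique_commonPred (hT : IsTrianglePresentation q T) {a b : F} (hab : a ≠ b) :
    ∃! p : F, (∃ k, (p, a, k) ∈ T) ∧ ∃ k, (p, b, k) ∈ T :=
  (hT.2.2.1 a b hab).1

theorem existsUnique_commonSucc (hT : IsTrianglePresentation q T) {a b : F} (hab : a ≠ b) :
    ∃! s : F, (∃ k, (a, s, k) ∈ T) ∧ ∃ k, (b, s, k) ∈ T :=
  (hT.2.2.1 a b hab).2

end

theorem card_commonPred (hT : IsTrianglePresentation q T) [DecidablePred (· ∈ T)] (c c' : F) :
    #{a | (∃ k, (a, c, k) ∈ T) ∧ ∃ k, (a, c', k) ∈ T} = if c = c' then q + 1 else 1 := by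
  split_ifs with hcc'
  · subst hcc'
    simp_rw [and_self]
    rw [← (hT.2.2.2 c).1, Set.ncard_eq_toFinset_card', Set.toFinset_ofPred]
  · exact (Fintype.existsUnique_iff_card_one _).mp (hT.existsUnique_commonPred hcc')

end IsTrianglePresentation

/-- The support of the matrix `(Y* ⊗ 1)(1 ⊗ Y)`. -/
def PairRel (T : Set (F × F × F)) (p r : F × F) : Prop :=
  ∃ x, (p.1, r.1, x) ∈ T ∧ (r.2, x, p.2) ∈ T

instance (T : Set (F × F × F)) [DecidablePred (· ∈ T)] (p r : F × F) :
    Decidable (PairRel T p r) := by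
  unfold PairRel; infer_instance

def pairMat (T : Set (F × F × F)) [DecidablePred (· ∈ T)] : Matrix (F × F) (F × F) ℂ :=
  of fun p r => if PairRel T p r then 1 else 0

theorem ystarOneMat_mul_oneYmat (q : ℕ) {T : Set (F × F × F)} [DecidablePred (· ∈ T)]
    (huniq : ∀ i j k k' : F, (i, j, k) ∈ T → (i, j, k') ∈ T → k = k') :
    ystarOneMat q T * oneYmat q T = ((q : ℂ) + 1)⁻¹ • pairMat T := by
  have hcoeff : star (((√((q : ℝ) + 1))⁻¹ : ℝ) : ℂ) * (((√((q : ℝ) + 1))⁻¹ : ℝ) : ℂ)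
      = ((q : ℂ) + 1)⁻¹ := by
    rw [Complex.star_def, Complex.conj_ofReal, ← Complex.ofReal_mul, ← mul_inv,
      Real.mul_self_sqrt (by positivity)]
    push_cast; rfl
  ext ⟨a, b⟩ ⟨c, d⟩
  simp only [mul_apply, ystarOneMat, oneYmat, Ymat, of_apply, conjTranspose_apply,
    Fintype.sum_prod_type, apply_ite star, star_zero, ite_zero_mul_ite_zero, ite_and,
    sum_ite_irrel, sum_ite_eq, sum_ite_eq', mem_univ, if_true, sum_const_zero, hcoeff]
  simp_rw [← ite_and]
  rw [sum_ite_zero _ _ fun x _ y _ hx hy ↦ huniq a c x y hx.1 hy.1, Matrix.smul_apply,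
    smul_eq_mul, pairMat, of_apply, mul_ite, mul_one, mul_zero]
  exact if_congr (by simp [PairRel]) rfl rfl

/-- The diagonal block `{(c, c)}` carries `q • 1 + J`, the Gram matrix of the point–predecessor
incidence; off that block the matrix is the identity. -/
def pairGram (q : ℕ) : Matrix (F × F) (F × F) ℕ :=
  of fun r r' => if r.1 = r.2 ∧ r'.1 = r'.2 then (if r = r' then q + 1 else 1)
    else if r = r' then 1 else 0

namespace IsTrianglePresentation

variable {q : ℕ} {T : Set (F × F × F)} (hT : IsTrianglePresentation q T)
include hT

section

omit [DecidableEq F]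

theorem pairRel_diag_iff {a b c : F} : PairRel T (a, b) (c, c) ↔ a = b ∧ ∃ k, (a, c, k) ∈ T := by
  constructor
  · rintro ⟨x, hacx, hcxb⟩
    exact ⟨hT.eq_of_mem (hT.rotate_inv hacx) hcxb, x, hacx⟩
  · rintro ⟨rfl, k, hack⟩
    exact ⟨k, hack, hT.rotate_inv hack⟩

theorem existsUnique_pairRel {c d : F} (hcd : c ≠ d) : ∃! p, PairRel T p (c, d) := by
  obtain ⟨x, ⟨⟨a, hcxa⟩, ⟨b, hdxb⟩⟩, hx⟩ := hT.existsUnique_commonSucc hcd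
  refine ⟨(a, b), ⟨x, hT.rotate hcxa, hdxb⟩, ?_⟩
  rintro ⟨a', b'⟩ ⟨y, hacy, hdyb⟩
  dsimp only at hacy hdyb
  obtain rfl : y = x := hx y ⟨⟨a', hT.rotate_inv hacy⟩, ⟨b', hdyb⟩⟩
  rw [hT.eq_of_mem (hT.rotate_inv hacy) hcxa, hT.eq_of_mem hdyb hdxb]

/-- Off the diagonal, `(c, d)` is recovered from any `p` related to it: the common predecessor of
`p.1` and `p.2` is unique. -/
theorem eq_of_pairRel_of_pairRel {c d : F} (hcd : c ≠ d) {p r : F × F}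
    (h : PairRel T p (c, d)) (h' : PairRel T p r) : r = (c, d) := by
  obtain ⟨a, b⟩ := p
  obtain ⟨x, hacx, hdxb⟩ := h
  obtain ⟨x', hacx', hdxb'⟩ := h'
  have hab : a ≠ b := by
    rintro rfl
    exact hcd (hT.eq_of_mem (hT.rotate hacx) (hT.rotate_inv hdxb))
  obtain ⟨_, -, hpred⟩ := hT.existsUnique_commonPred hab
  obtain rfl : x' = x :=
    (hpred x' ⟨⟨_, hT.rotate hacx'⟩, ⟨_, hT.rotate_inv hdxb'⟩⟩).trans
      (hpred x ⟨⟨_, hT.rotate hacx⟩, ⟨_, hT.rotate_inv hdxb⟩⟩).symm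
  exact Prod.ext (hT.eq_of_mem (hT.rotate hacx') (hT.rotate hacx))
    (hT.eq_of_mem (hT.rotate_inv hdxb') (hT.rotate_inv hdxb))

end

section

variable [DecidablePred (· ∈ T)]

theorem card_pairRel_and_pairRel_of_ne {c d : F} (hcd : c ≠ d) (r : F × F) :
    #{p | PairRel T p (c, d) ∧ PairRel T p r} = if r = (c, d) then 1 else 0 := by
  split_ifs with hr
  · subst hr
    simp_rw [and_self]
    exact (Fintype.existsUnique_iff_card_one _).mp (hT.existsUnique_pairRel hcd)
  · rw [card_eq_zero, filter_eq_empty_iff]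
    exact fun p _ h ↦ hr (hT.eq_of_pairRel_of_pairRel hcd h.1 h.2)

theorem card_pairRel_and_pairRel (r r' : F × F) :
    #{p | PairRel T p r ∧ PairRel T p r'} = pairGram q r r' := by
  obtain ⟨c, d⟩ := r
  obtain ⟨c', d'⟩ := r'
  by_cases hcd : c = d
  · by_cases hcd' : c' = d'
    · subst hcd hcd'
      have hdiag : ({p | PairRel T p (c, c) ∧ PairRel T p (c', c')} : Finset (F × F)) =
          image (fun a ↦ (a, a)) {a | (∃ k, (a, c, k) ∈ T) ∧ ∃ k, (a, c', k) ∈ T} := by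
        ext ⟨a, b⟩
        simp only [hT.pairRel_diag_iff, mem_filter_univ, mem_image, Prod.mk.injEq]
        constructor
        · rintro ⟨⟨rfl, hc⟩, -, hc'⟩
          exact ⟨a, ⟨hc, hc'⟩, rfl, rfl⟩
        · rintro ⟨a, ⟨hc, hc'⟩, rfl, rfl⟩
          exact ⟨⟨rfl, hc⟩, rfl, hc'⟩
      rw [hdiag, card_image_of_injective _ fun a b h ↦ congrArg Prod.fst h, hT.card_commonPred]
      simp [pairGram]
    · simp_rw [and_comm (a := PairRel T _ (c, d))]
      rw [hT.card_pairRel_and_pairRel_of_ne hcd']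
      simp [pairGram, hcd']
  · rw [hT.card_pairRel_and_pairRel_of_ne hcd]
    simp [pairGram, hcd, eq_comm]

theorem conjTranspose_pairMat_mul_self :
    (pairMat T)ᴴ * pairMat T = (pairGram q).map (Nat.cast : ℕ → ℂ) := by
  ext r r'
  simp only [mul_apply, conjTranspose_apply, pairMat, of_apply, map_apply, apply_ite star,
    star_one, star_zero, ite_zero_mul_ite_zero, mul_one, ← hT.card_pairRel_and_pairRel,
    ← sum_boole]

end

end IsTrianglePresentation

theorem pairGram_mulVec_apply (q : ℕ) (v : F × F → ℂ) (c d : F) :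
    ((pairGram q).map (Nat.cast : ℕ → ℂ) *ᵥ v) (c, d) =
      if c = d then q * v (c, c) + ∑ c', v (c', c') else v (c, d) := by
  split_ifs with hcd
  · subst hcd
    have hentry : ∀ r, (pairGram q).map (Nat.cast : ℕ → ℂ) (c, c) r * v r =
        (if r = (c, c) then (q : ℂ) * v r else 0) + if r.1 = r.2 then v r else 0 := by
      rintro ⟨c', d'⟩
      by_cases hc' : c' = c <;> by_cases hd' : d' = c <;> simp_all [pairGram, eq_comm]
      ring
    simp only [mulVec, dotProduct, hentry, sum_add_distrib, sum_ite_eq', mem_univ, if_true,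
      Fintype.sum_prod_type, sum_ite_eq]
  · simp [mulVec, dotProduct, pairGram, hcd]

theorem isUnit_pairGram {q : ℕ} (hq : q ≠ 0) :
    IsUnit ((pairGram q).map (Nat.cast : ℕ → ℂ) : Matrix (F × F) (F × F) ℂ) := by
  rw [isUnit_iff_isUnit_det, isUnit_iff_ne_zero, Ne, ← exists_mulVec_eq_zero_iff]
  rintro ⟨v, hv0, hv⟩
  have hv_apply (c d : F) := congrFun hv (c, d)
  simp only [pairGram_mulVec_apply, Pi.zero_apply] at hv_apply
  have hdiag (c : F) : (q : ℂ) * v (c, c) + ∑ c', v (c', c') = 0 := by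
    simpa using hv_apply c c
  have htrace : ∑ c, v (c, c) = 0 := by
    have hsum := sum_eq_zero (s := univ) fun c _ ↦ hdiag c
    rw [sum_add_distrib, ← mul_sum, sum_const, card_univ, nsmul_eq_mul, ← add_mul] at hsum
    exact (mul_eq_zero.mp hsum).resolve_left (by norm_cast; omega)
  refine hv0 (funext fun ⟨c, d⟩ ↦ ?_)
  by_cases hcd : c = d
  · subst hcd
    simpa [htrace, hq] using hdiag c
  · simpa [hcd] using hv_apply c d

/-- The operator `(Y* ⊗ 1)(1 ⊗ Y)` on `ℂ^F ⊗ ℂ^F` is invertible. -/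
theorem ystarOne_oneY_invertible (q : ℕ) (hq : 2 ≤ q) (T : Set (F × F × F))
    [DecidablePred (· ∈ T)] (hT : IsTrianglePresentation q T) :
    IsUnit (ystarOneMat q T * oneYmat q T) := by
  have hGram : IsUnit ((pairMat T)ᴴ * pairMat T) := by
    rw [hT.conjTranspose_pairMat_mul_self]
    exact isUnit_pairGram (by omega)
  rw [ystarOneMat_mul_oneYmat q fun _ _ _ _ ↦ hT.eq_of_mem]
  exact (isUnit_of_mul_isUnit_right hGram).smul
    (Units.mk0 ((q : ℂ) + 1)⁻¹ (inv_ne_zero q.cast_add_one_ne_zero))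
end

section
/- Fix μ ∈ (−1,1) with μ ≠ 0, let E ∈ (ℂ³)^{⊗3} be the q-deformed determinant vector, let P = μ^{-2}(1+μ²)^{-1}(E* ⊗ 1 ⊗ 1)(1 ⊗ 1 ⊗ E) on ℂ³ ⊗ ℂ³, and let L = ‖E‖^{-2}·EE* be the orthogonal projection of (ℂ³)^{⊗3} onto the span of E, where ‖E‖² = (1+μ²)(1+μ²+μ⁴). Then, as operators on (ℂ³)^{⊗3}: (1 ⊗ P)(P ⊗ 1)(1 ⊗ P) = (μ + μ^{-1})^{-2}·((1 ⊗ P) − L) + L. -/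
/-!
By the q-cyclicity of `E`, `P = (1+μ²)⁻¹ W Wᵀ`, where the columns of `W = qWedge μ` are the
q-antisymmetric tensors `e_i ⊗ e_j - μ e_j ⊗ e_i` (`i < j`). Hence `1 ⊗ P = (1+μ²)⁻¹ V Vᵀ` with
`V = 1 ⊗ W`, so the triple product is `(1+μ²)⁻² V (Vᵀ (P ⊗ 1) V) Vᵀ`, and only the compression
`Vᵀ (P ⊗ 1) V = (1+μ²)⁻¹ X Xᵀ` matters, `X = Vᵀ (W ⊗ 1)` being the `9 × 9` contraction
`crossing μ`, a q-analogue of `ε_{jap} ε_{kpm}`. A direct computation gives `X Xᵀ = μ² • 1 + w wᵀ`,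
where `E = V w`; so the triple product is a combination of `1 ⊗ P` and `E Eᵀ`, with coefficients
matching because `(1+μ²)² - μ² = 1 + μ² + μ⁴`.
-/

open Matrix

/-- The q-deformed determinant vector
`E = e₁₂₃ − μe₁₃₂ − μe₂₁₃ + μ²e₂₃₁ + μ²e₃₁₂ − μ³e₃₂₁ ∈ (ℂ³)^{⊗3}`, in the identification
of `(ℂ³)^{⊗3}` with functions `(Fin 3)³ → ℂ` (with the standard basis indexed from `0`). -/
noncomputable def Ev (μ : ℝ) : Fin 3 × Fin 3 × Fin 3 → ℂ := fun x =>
  if x = (0, 1, 2) then 1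
  else if x = (0, 2, 1) then -(μ : ℂ)
  else if x = (1, 0, 2) then -(μ : ℂ)
  else if x = (1, 2, 0) then (μ : ℂ) ^ 2
  else if x = (2, 0, 1) then (μ : ℂ) ^ 2
  else if x = (2, 1, 0) then -(μ : ℂ) ^ 3
  else 0

/-- The matrix of `1 ⊗ 1 ⊗ E : ℂ³ ⊗ ℂ³ → (ℂ³)^{⊗5}`. -/
noncomputable def oneOneE3 (μ : ℝ) :
    Matrix (Fin 3 × Fin 3 × Fin 3 × Fin 3 × Fin 3) (Fin 3 × Fin 3) ℂ :=
  Matrix.of fun x p =>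
    if x.1 = p.1 ∧ x.2.1 = p.2 then Ev μ (x.2.2.1, x.2.2.2.1, x.2.2.2.2) else 0

/-- The matrix of `E* ⊗ 1 ⊗ 1 : (ℂ³)^{⊗5} → ℂ³ ⊗ ℂ³`. -/
noncomputable def estarOneOne3 (μ : ℝ) :
    Matrix (Fin 3 × Fin 3) (Fin 3 × Fin 3 × Fin 3 × Fin 3 × Fin 3) ℂ :=
  Matrix.of fun p x =>
    if p.1 = x.2.2.2.1 ∧ p.2 = x.2.2.2.2 then star (Ev μ (x.1, x.2.1, x.2.2.1)) else 0

/-- The matrix of `E ⊗ 1 ⊗ 1 : ℂ³ ⊗ ℂ³ → (ℂ³)^{⊗5}`. -/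
noncomputable def eOneOne3 (μ : ℝ) :
    Matrix (Fin 3 × Fin 3 × Fin 3 × Fin 3 × Fin 3) (Fin 3 × Fin 3) ℂ :=
  Matrix.of fun x p =>
    if x.2.2.2.1 = p.1 ∧ x.2.2.2.2 = p.2 then Ev μ (x.1, x.2.1, x.2.2.1) else 0

/-- The matrix of `1 ⊗ 1 ⊗ E* : (ℂ³)^{⊗5} → ℂ³ ⊗ ℂ³`. -/
noncomputable def oneOneEstar3 (μ : ℝ) :
    Matrix (Fin 3 × Fin 3) (Fin 3 × Fin 3 × Fin 3 × Fin 3 × Fin 3) ℂ :=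
  Matrix.of fun p x =>
    if p.1 = x.1 ∧ p.2 = x.2.1 then star (Ev μ (x.2.2.1, x.2.2.2.1, x.2.2.2.2)) else 0

/-- The operator `P = μ⁻²(1+μ²)⁻¹ (E* ⊗ 1 ⊗ 1)(1 ⊗ 1 ⊗ E)` on `ℂ³ ⊗ ℂ³`. -/
noncomputable def Pmat3 (μ : ℝ) : Matrix (Fin 3 × Fin 3) (Fin 3 × Fin 3) ℂ :=
  (((μ : ℂ) ^ 2)⁻¹ * (1 + (μ : ℂ) ^ 2)⁻¹) • (estarOneOne3 μ * oneOneE3 μ)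

/-- The matrix of `1 ⊗ P : (ℂ³)^{⊗3} → (ℂ³)^{⊗3}`. -/
noncomputable def onePmat3 (μ : ℝ) : Matrix (Fin 3 × Fin 3 × Fin 3) (Fin 3 × Fin 3 × Fin 3) ℂ :=
  Matrix.of fun x y => if x.1 = y.1 then Pmat3 μ x.2 y.2 else 0

/-- The matrix of `P ⊗ 1 : (ℂ³)^{⊗3} → (ℂ³)^{⊗3}`. -/
noncomputable def pOneMat3 (μ : ℝ) : Matrix (Fin 3 × Fin 3 × Fin 3) (Fin 3 × Fin 3 × Fin 3) ℂ :=
  Matrix.of fun x y => if x.2.2 = y.2.2 then Pmat3 μ (x.1, x.2.1) (y.1, y.2.1) else 0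

/-- The orthogonal projection `L = ‖E‖⁻² EE*` of `(ℂ³)^{⊗3}` onto the span of `E`, where
`‖E‖² = (1+μ²)(1+μ²+μ⁴)`. -/
noncomputable def Lmat3 (μ : ℝ) : Matrix (Fin 3 × Fin 3 × Fin 3) (Fin 3 × Fin 3 × Fin 3) ℂ :=
  (((1 + (μ : ℂ) ^ 2) * (1 + (μ : ℂ) ^ 2 + (μ : ℂ) ^ 4))⁻¹) •
    Matrix.vecMulVec (Ev μ) (star (Ev μ))

open scoped Kronecker

section Sandwich

variable {m n R : Type*} [Fintype m] [Fintype n] [DecidableEq n] [CommRing R]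

theorem mul_transpose_mul_mul_transpose_eq (V : Matrix m n R) (B : Matrix m m R) (c d : R)
    (w : n → R) (h : Vᵀ * B * V = c • 1 + d • vecMulVec w w) :
    V * Vᵀ * B * (V * Vᵀ) = c • (V * Vᵀ) + d • vecMulVec (V *ᵥ w) (V *ᵥ w) := by
  calc V * Vᵀ * B * (V * Vᵀ) = V * (Vᵀ * B * V) * Vᵀ := by simp only [Matrix.mul_assoc]
    _ = _ := by
      rw [h, Matrix.mul_add, Matrix.add_mul, Matrix.mul_smul, Matrix.mul_smul, Matrix.smul_mul,
        Matrix.smul_mul, Matrix.mul_one, mul_vecMulVec, vecMulVec_mul, vecMul_transpose]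

end Sandwich

theorem fin3_cases (i : Fin 3) : i = 0 ∨ i = 1 ∨ i = 2 := by omega

noncomputable def qWedge (μ : ℝ) : Matrix (Fin 3 × Fin 3) (Fin 3) ℂ :=
  Matrix.of fun p k =>
    if k = p.1 ∨ k = p.2 ∨ p.1 = p.2 then 0 else if p.1 < p.2 then 1 else -(μ : ℂ)

theorem Ev_eq_qWedge (μ : ℝ) (k : Fin 3) (p : Fin 3 × Fin 3) :
    Ev μ (k, p) = (-(μ : ℂ)) ^ (k : ℕ) * qWedge μ p k := by
  obtain ⟨i, j⟩ := p
  rcases fin3_cases k with rfl|rfl|rfl <;> rcases fin3_cases i with rfl|rfl|rfl <;>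
  rcases fin3_cases j with rfl|rfl|rfl <;> simp [Ev, qWedge] <;> ring

theorem Ev_rotate_eq_qWedge (μ : ℝ) (k : Fin 3) (p : Fin 3 × Fin 3) :
    Ev μ (p.1, p.2, k) * (-(μ : ℂ)) ^ (k : ℕ) = (μ : ℂ) ^ 2 * qWedge μ p k := by
  obtain ⟨i, j⟩ := p
  rcases fin3_cases k with rfl|rfl|rfl <;> rcases fin3_cases i with rfl|rfl|rfl <;>
  rcases fin3_cases j with rfl|rfl|rfl <;> simp [Ev, qWedge] <;> ring

theorem star_Ev_apply (μ : ℝ) (x : Fin 3 × Fin 3 × Fin 3) : star (Ev μ x) = Ev μ x := by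
  simp only [Ev]
  split_ifs <;> simp

theorem estarOneOne3_mul_oneOneE3_apply (μ : ℝ) (p q : Fin 3 × Fin 3) :
    (estarOneOne3 μ * oneOneE3 μ) p q = ∑ k, star (Ev μ (q.1, q.2, k)) * Ev μ (k, p.1, p.2) := by
  simp [mul_apply, estarOneOne3, oneOneE3, Fintype.sum_prod_type, ite_and]

theorem Pmat3_eq (μ : ℝ) (hμ : μ ≠ 0) :
    Pmat3 μ = (1 + (μ : ℂ) ^ 2)⁻¹ • (qWedge μ * (qWedge μ)ᵀ) := by
  have hμ' : (μ : ℂ) ≠ 0 := by exact_mod_cast hμ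
  ext p q
  have hsum : ∑ k, star (Ev μ (q.1, q.2, k)) * Ev μ (k, p.1, p.2)
      = (μ : ℂ) ^ 2 * ∑ k, qWedge μ p k * qWedge μ q k := by
    rw [Finset.mul_sum]
    refine Finset.sum_congr rfl fun k _ => ?_
    rw [star_Ev_apply, Ev_eq_qWedge μ k (p.1, p.2)]
    linear_combination qWedge μ (p.1, p.2) k * Ev_rotate_eq_qWedge μ k q
  rw [Pmat3, Matrix.smul_apply, estarOneOne3_mul_oneOneE3_apply, hsum, Matrix.smul_apply, mul_apply]
  simp only [transpose_apply, smul_eq_mul]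
  field_simp

noncomputable def oneWedge (μ : ℝ) : Matrix (Fin 3 × Fin 3 × Fin 3) (Fin 3 × Fin 3) ℂ :=
  1 ⊗ₖ qWedge μ

noncomputable def wedgeOne (μ : ℝ) : Matrix (Fin 3 × Fin 3 × Fin 3) (Fin 3 × Fin 3) ℂ :=
  (qWedge μ ⊗ₖ 1).submatrix (Equiv.prodAssoc _ _ _).symm id

theorem onePmat3_eq (μ : ℝ) (hμ : μ ≠ 0) :
    onePmat3 μ = (1 + (μ : ℂ) ^ 2)⁻¹ • (oneWedge μ * (oneWedge μ)ᵀ) := by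
  have hkron : onePmat3 μ = 1 ⊗ₖ Pmat3 μ := by
    ext x y
    simp [onePmat3, one_apply]
  rw [hkron, Pmat3_eq μ hμ, oneWedge, ← kroneckerMap_transpose, ← mul_kronecker_mul,
    transpose_one, Matrix.mul_one, kronecker_smul]

theorem pOneMat3_eq (μ : ℝ) (hμ : μ ≠ 0) :
    pOneMat3 μ = (1 + (μ : ℂ) ^ 2)⁻¹ • (wedgeOne μ * (wedgeOne μ)ᵀ) := by
  have hkron : pOneMat3 μ =
      (Pmat3 μ ⊗ₖ 1).submatrix (Equiv.prodAssoc _ _ _).symm (Equiv.prodAssoc _ _ _).symm := by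
    ext x y
    simp [pOneMat3, one_apply]
  rw [hkron, Pmat3_eq μ hμ, wedgeOne, transpose_submatrix,
    ← submatrix_mul _ _ _ _ _ Function.bijective_id, ← kroneckerMap_transpose, ← mul_kronecker_mul,
    transpose_one, Matrix.mul_one, smul_kronecker]
  rfl

noncomputable def qDetCoord (μ : ℝ) : Fin 3 × Fin 3 → ℂ :=
  fun x => if x.1 = x.2 then (-(μ : ℂ)) ^ (x.1 : ℕ) else 0

theorem Ev_eq_oneWedge_mulVec (μ : ℝ) : Ev μ = oneWedge μ *ᵥ qDetCoord μ := by
  ext ⟨a, p⟩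
  simp [oneWedge, mulVec, dotProduct, Fintype.sum_prod_type, one_apply, qDetCoord, Ev_eq_qWedge,
    mul_comm]

noncomputable def crossing (μ : ℝ) : Matrix (Fin 3 × Fin 3) (Fin 3 × Fin 3) ℂ :=
  Matrix.of fun x y => ∑ p : Fin 3, qWedge μ (x.1, p) y.1 * qWedge μ (p, y.2) x.2

theorem oneWedge_transpose_mul_wedgeOne (μ : ℝ) :
    (oneWedge μ)ᵀ * wedgeOne μ = crossing μ := by
  ext ⟨a, k⟩ ⟨j, m⟩
  simp [oneWedge, wedgeOne, crossing, mul_apply, Fintype.sum_prod_type, one_apply, mul_comm]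

theorem crossing_mul_transpose (μ : ℝ) :
    crossing μ * (crossing μ)ᵀ = (μ : ℂ) ^ 2 • 1 + vecMulVec (qDetCoord μ) (qDetCoord μ) := by
  ext ⟨a, k⟩ ⟨b, l⟩
  rcases fin3_cases a with rfl|rfl|rfl <;> rcases fin3_cases k with rfl|rfl|rfl <;>
  rcases fin3_cases b with rfl|rfl|rfl <;> rcases fin3_cases l with rfl|rfl|rfl <;>
  · simp only [crossing, qWedge, qDetCoord, mul_apply, of_apply, transpose_apply,
      Fintype.sum_prod_type, Fin.sum_univ_three, one_apply, vecMulVec_apply, Matrix.add_apply,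
      Matrix.smul_apply, smul_eq_mul, Prod.mk.injEq, Fin.isValue, Fin.reduceEq, Fin.reduceLT,
      Fin.val_zero, Fin.val_one, Fin.val_two, or_self, or_true, true_or, and_self, and_true,
      and_false, reduceIte]
    ring

theorem oneWedge_transpose_mul_pOneMat3_mul_oneWedge (μ : ℝ) (hμ : μ ≠ 0) :
    (oneWedge μ)ᵀ * pOneMat3 μ * oneWedge μ =
      ((1 + (μ : ℂ) ^ 2)⁻¹ * (μ : ℂ) ^ 2) • 1 +
        (1 + (μ : ℂ) ^ 2)⁻¹ • vecMulVec (qDetCoord μ) (qDetCoord μ) := by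
  rw [pOneMat3_eq μ hμ, Matrix.mul_smul, Matrix.smul_mul, ← Matrix.mul_assoc,
    Matrix.mul_assoc _ _ (oneWedge μ), ← transpose_transpose (oneWedge μ), ← transpose_mul,
    transpose_transpose, oneWedge_transpose_mul_wedgeOne, crossing_mul_transpose, smul_add,
    smul_smul]

theorem Lmat3_eq (μ : ℝ) : Lmat3 μ = ((1 + (μ : ℂ) ^ 2) * (1 + (μ : ℂ) ^ 2 + (μ : ℂ) ^ 4))⁻¹ •
    vecMulVec (oneWedge μ *ᵥ qDetCoord μ) (oneWedge μ *ᵥ qDetCoord μ) := by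
  have hstar : star (Ev μ) = Ev μ := funext (star_Ev_apply μ)
  rw [Lmat3, hstar, Ev_eq_oneWedge_mulVec]

theorem oneP_pOne_oneP_su3_general (μ : ℝ) (hμ0 : μ ≠ 0) :
    onePmat3 μ * pOneMat3 μ * onePmat3 μ =
      ((((μ : ℂ) + (μ : ℂ)⁻¹) ^ 2)⁻¹) • (onePmat3 μ - Lmat3 μ) + Lmat3 μ := by
  have hμ : (μ : ℂ) ≠ 0 := by exact_mod_cast hμ0
  have h₂ : (1 : ℂ) + (μ : ℂ) ^ 2 ≠ 0 := by exact_mod_cast (by positivity : (1 + μ ^ 2 : ℝ) ≠ 0)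
  have h₄ : (1 : ℂ) + (μ : ℂ) ^ 2 + (μ : ℂ) ^ 4 ≠ 0 := by
    exact_mod_cast (by positivity : (1 + μ ^ 2 + μ ^ 4 : ℝ) ≠ 0)
  have hcoeff : (((μ : ℂ) + (μ : ℂ)⁻¹) ^ 2)⁻¹ = (μ : ℂ) ^ 2 / (1 + (μ : ℂ) ^ 2) ^ 2 := by
    rw [show (μ : ℂ) + (μ : ℂ)⁻¹ = (1 + (μ : ℂ) ^ 2) / μ by field_simp; ring, div_pow, inv_div]
  rw [Lmat3_eq, onePmat3_eq μ hμ0, Matrix.smul_mul, Matrix.mul_smul, Matrix.smul_mul,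
    mul_transpose_mul_mul_transpose_eq _ _ _ _ _
      (oneWedge_transpose_mul_pOneMat3_mul_oneWedge μ hμ0), hcoeff]
  match_scalars <;> field_simp
  ring

/-- `(1 ⊗ P)(P ⊗ 1)(1 ⊗ P) = (μ + μ⁻¹)⁻²((1 ⊗ P) − L) + L` as operators on `(ℂ³)^{⊗3}`. -/
theorem oneP_pOne_oneP_su3 (μ : ℝ) (hμ1 : -1 < μ) (hμ2 : μ < 1) (hμ0 : μ ≠ 0) :
    onePmat3 μ * pOneMat3 μ * onePmat3 μ =
      ((((μ : ℂ) + (μ : ℂ)⁻¹) ^ 2)⁻¹) • (onePmat3 μ - Lmat3 μ) + Lmat3 μ :=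
  oneP_pOne_oneP_su3_general μ hμ0
end
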